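/- arXiv:1712.05513 — 7 statements merged into one kernel-verified Lean document; each statement's English description precedes it below -/
import Mathlib

section
/- Small-model property for the Bernays–Schönfinkel–Ramsey fragment (core of the paper's Lemma 2): Let L be a relational first-order language (L has no function symbols, and in particular no constant symbols). Let n, m be natural numbers and let ψ be a quantifier-free L-bounded-formula with no free variables and n + m bound-variable slots. If the sentence ∃x₁…∃xₙ ∀y₁…∀yₘ ψ — obtained by universally quantifying the last m variable slots of ψ and then existentially quantifying the first n — is satisfied by some nonempty L-structure, then it is satisfied by some L-structure whose universe has cardinality at most max n 1. -/
open FirstOrder Language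

/-- Universally quantifies the last `m` bound-variable slots of a bounded formula. -/
def univCloseLast (L : FirstOrder.Language) {n : ℕ} :
    ∀ (m : ℕ), L.BoundedFormula Empty (n + m) → L.BoundedFormula Empty n
  | 0, φ => φ
  | m + 1, φ => univCloseLast L m φ.all

lemma univCloseLast_isUniversal (L : FirstOrder.Language) {n : ℕ} :
    ∀ (m : ℕ) (φ : L.BoundedFormula Empty (n + m)), φ.IsUniversal →
      (univCloseLast L m φ).IsUniversal
  | 0, φ, h => h
  | m + 1, φ, h => univCloseLast_isUniversal L m φ.all h.all

/-- Small-model property for the Bernays–Schönfinkel–Ramsey fragment: an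
`∃ⁿ∀ᵐ` sentence over a relational language that has a (nonempty) model has a
model of cardinality at most `max n 1`. -/
theorem bsr_small_model {L : FirstOrder.Language} [L.IsRelational] (n m : ℕ)
    (ψ : L.BoundedFormula Empty (n + m)) (hψ : ψ.IsQF)
    (h : ∃ (M : Type) (S : L.Structure M), Nonempty M ∧
      @Sentence.Realize L M S (univCloseLast L m ψ).exs) :
    ∃ (M : Type) (S : L.Structure M), Nonempty M ∧
      @Sentence.Realize L M S (univCloseLast L m ψ).exs ∧
      Cardinal.mk M ≤ max (n : Cardinal) 1 := by
  obtain ⟨M, S, ⟨m₀⟩, hr⟩ := h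
  rw [Sentence.Realize, BoundedFormula.realize_exs] at hr
  obtain ⟨xs, hxs⟩ := hr
  -- the carrier: values of the witnesses, padded with `m₀`
  set k : ℕ := max n 1 with hk
  have hk1 : 0 < k := lt_of_lt_of_le one_pos (le_max_right n 1)
  set g : Fin k → M := fun i => if h : (i : ℕ) < n then xs ⟨i, h⟩ else m₀ with hg
  have hclosed : ∀ {l}, ∀ f : L.Functions l, ClosedUnder f (Set.range g) :=
    fun {l} f => isEmptyElim f
  set S' : L.Substructure M := ⟨Set.range g, hclosed⟩ with hS'
  have hmem : ∀ i : Fin n, xs i ∈ S' := by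
    intro i
    refine ⟨⟨i, lt_of_lt_of_le i.2 (le_max_left n 1)⟩, ?_⟩
    simp [hg, i.2]
  set xs' : Fin n → S' := fun i => ⟨xs i, hmem i⟩ with hxs'
  refine ⟨S', inferInstance, ⟨⟨g ⟨0, hk1⟩, ⟨0, hk1⟩, rfl⟩⟩, ?_, ?_⟩
  · rw [Sentence.Realize, BoundedFormula.realize_exs]
    refine ⟨xs', ?_⟩
    have hU := univCloseLast_isUniversal L m ψ hψ.isUniversal
    refine hU.realize_embedding S'.subtype ?_
    have h1 : (S'.subtype : S' → M) ∘ xs' = xs := by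
      funext i; rfl
    have h2 : (S'.subtype : S' → M) ∘ (default : Empty → S') = default := by
      funext e; exact e.elim
    rw [h1, h2]
    exact hxs
  · calc Cardinal.mk S' ≤ Cardinal.mk (Fin k) := Cardinal.mk_range_le
      _ = (k : Cardinal) := by simp
      _ = max (n : Cardinal) 1 := by
          rw [hk, Nat.mono_cast.map_max, Nat.cast_one]
end

section
/- Semantic correctness of the Ackermann reduction (core of the paper's Lemma 4 / Step 3, eliminating a universally quantified function variable): Let M and B be types with B nonempty, let m be a natural number, let t : Fin m → M (the arguments of the m occurrences of the function variable F), and let Q : (Fin m → B) → Prop (the remainder of the formula, depending only on the m values that F takes on these arguments). Then (∀ F : M → B, Q (fun j => F (t j))) holds if and only if for every v : Fin m → B satisfying the Ackermann congruence constraints — for all j j' : Fin m, t j = t j' implies v j = v j' — the proposition Q v holds. -/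
/-- Semantic correctness of the Ackermann reduction: universally quantifying over a
function variable `F` is equivalent to universally quantifying over the tuple of its
values on the argument terms, subject to the functional-congruence constraints. -/
theorem ackermann_reduction_correct {M B : Type} [Nonempty B] (m : ℕ)
    (t : Fin m → M) (Q : (Fin m → B) → Prop) :
    (∀ F : M → B, Q (fun j => F (t j))) ↔
      (∀ v : Fin m → B, (∀ j j' : Fin m, t j = t j' → v j = v j') → Q v) := by
  constructor
  · intro h v hv
    classical
    set F : M → B := fun x => if hx : ∃ j, t j = x then v hx.choose else Classical.arbitrary B
    have : (fun j => F (t j)) = v := by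
      funext j
      have hx : ∃ j', t j' = t j := ⟨j, rfl⟩
      simp only [F, dif_pos hx]
      exact hv _ _ hx.choose_spec
    simpa [this] using h F
  · intro h F
    exact h _ (fun j j' hjj => by simp [hjj])
end

section
/- Single-clause sort decomposition (the per-clause core of the paper's Lemma 6): Let ι be a type indexing the sorts, let X : ι → Type be a family of nonempty types (the pairwise-disjoint universes of the sorts), and let A : (i : ι) → X i → Prop be a family of predicates, where A i represents the restriction of a single clause to the atoms of sort i. Then (∀ f : (∀ i, X i), ∃ i, A i (f i)) holds if and only if (∃ i, ∀ x : X i, A i x) holds. -/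
/-- Single-clause sort decomposition: a clause (disjunction over sorts of its
sort-`i` parts) holds under every assignment of the universal variables iff some
sort-`i` part is valid on its own universe. -/
theorem single_clause_sort_decomposition {ι : Type} (X : ι → Type)
    [∀ i, Nonempty (X i)] (A : (i : ι) → X i → Prop) :
    (∀ f : (∀ i, X i), ∃ i, A i (f i)) ↔ (∃ i, ∀ x : X i, A i x) := by
  constructor
  · intro h
    by_contra hc
    push_neg at hc
    choose g hg using hc
    obtain ⟨i, hi⟩ := h g
    exact hg i hi
  · rintro ⟨i, hi⟩ f
    exact ⟨i, hi (f i)⟩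
end

section
/- Decomposition lemma with contracts (the paper's Lemma 6, semantic form): Let ι be a type indexing the sorts, let X : ι → Type be a family of nonempty types (the pairwise-disjoint universes of the sorts), let r be a natural number (the number of clauses), and let A : Fin r → (i : ι) → X i → X i → Prop, where A j i x y represents the restriction of clause j to sort i, evaluated at the existential data x and universal data y of sort i. Then (∃ g : (∀ i, X i), ∀ f : (∀ i, X i), ∀ j : Fin r, ∃ i : ι, A j i (g i) (f i)) holds if and only if there exists a contract L : Fin r → ι such that for every sort i there exists x : X i such that for every y : X i and every clause j with L j = i, A j i x y holds. -/
/-- Decomposition lemma with contracts: an `∃∀` CNF sentence over pairwise-disjoint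
sorted universes is satisfiable iff there is a contract `L` assigning to each clause
a sort whose part of that clause can be made valid. -/
theorem decomposition_with_contracts {ι : Type} (X : ι → Type)
    [∀ i, Nonempty (X i)] (r : ℕ)
    (A : Fin r → (i : ι) → X i → X i → Prop) :
    (∃ g : (∀ i, X i), ∀ f : (∀ i, X i), ∀ j : Fin r, ∃ i : ι, A j i (g i) (f i)) ↔
      (∃ L : Fin r → ι, ∀ i : ι, ∃ x : X i, ∀ y : X i,
        ∀ j : Fin r, L j = i → A j i x y) := by
  constructor
  · rintro ⟨g, hg⟩
    have key : ∀ j : Fin r, ∃ i : ι, ∀ y : X i, A j i (g i) y := by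
      intro j
      by_contra h
      push_neg at h
      choose f hf using h
      exact absurd (hg f j) (by push_neg; exact hf)
    choose L hL using key
    refine ⟨L, fun i => ⟨g i, fun y j hj => ?_⟩⟩
    subst hj; exact hL j y
  · rintro ⟨L, hL⟩
    choose x hx using hL
    exact ⟨x, fun f j => ⟨L j, hx (L j) (f (L j)) j rfl⟩⟩
end

section
/- Correctness of the program synthesized for M_three (the paper's motivating example): Define f : ℤ → ℤ by f(n) = n − 30 if n > 13, and f(n) = −16 otherwise. Then f satisfies the defining specification of M_three: for every integer n, if n > 13 then f(n) = n − 30, and if n ≤ 13 then f(n) = f(f(f(n + 61))). -/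
/-- The synthesized program for `M_three`. -/
def mThreeProg (n : ℤ) : ℤ := if n > 13 then n - 30 else -16

/-- Correctness of the program synthesized for `M_three`: it satisfies the defining
recursive specification of the variant of McCarthy's 91 function. -/
theorem mThreeProg_correct :
    ∀ n : ℤ, (n > 13 → mThreeProg n = n - 30) ∧
      (n ≤ 13 → mThreeProg n = mThreeProg (mThreeProg (mThreeProg (n + 61)))) := by
  intro n
  unfold mThreeProg
  constructor <;> intro h <;> split_ifs <;> omega
end

section
/- Closed form for Knuth's generalization of the McCarthy 91 function in the case d − (c−1)·b = 1 (the case in which the paper's tool synthesized solutions, matching Knuth's Theorem 1): Let a b : ℤ with b ≥ 1, let c : ℕ with c ≥ 1, and let d = (c − 1)·b + 1 (so d − (c−1)·b = 1). Define f : ℤ → ℤ by f(n) = n − b if n > a, and f(n) = a − b + 1 otherwise. Then f satisfies Knuth's recursive specification: for every integer n, if n > a then f(n) = n − b, and if n ≤ a then f^[c](n + d) = f(n), where f^[c] denotes the c-fold iterate of f. -/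
/-- The closed-form program for Knuth's generalization of the McCarthy 91 function. -/
def knuthProg (a b : ℤ) (n : ℤ) : ℤ := if n > a then n - b else a - b + 1

lemma knuthProg_aux (a b : ℤ) (hb : b ≥ 1) :
    ∀ k : ℕ, 1 ≤ k → ∀ m : ℤ, m ≤ a + ((k : ℤ) - 1) * b + 1 →
      (knuthProg a b)^[k] m = a - b + 1 := by
  intro k hk
  induction k, hk using Nat.le_induction with
  | base =>
    intro m hm
    simp only [Function.iterate_one, knuthProg]
    split_ifs with h <;> push_cast at hm <;> omega
  | succ k hk ih =>
    intro m hm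
    rw [Function.iterate_succ_apply]
    apply ih
    unfold knuthProg
    push_cast at hm ⊢
    split_ifs with h
    · nlinarith
    · have hk' : (1:ℤ) ≤ (k:ℤ) := by exact_mod_cast hk
      nlinarith [mul_nonneg (by linarith : (0:ℤ) ≤ (k:ℤ) - 1) (by linarith : (0:ℤ) ≤ b)]

/-- Closed form for Knuth's generalized McCarthy function in the case
`d - (c - 1) * b = 1`: the program `fun n => if n > a then n - b else a - b + 1`
satisfies Knuth's recursive specification. -/
theorem knuthProg_correct (a b : ℤ) (hb : b ≥ 1) (c : ℕ) (hc : c ≥ 1) (d : ℤ)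
    (hd : d = ((c : ℤ) - 1) * b + 1) :
    ∀ n : ℤ, (n > a → knuthProg a b n = n - b) ∧
      (n ≤ a → (knuthProg a b)^[c] (n + d) = knuthProg a b n) := by
  intro n
  constructor
  · intro h; simp [knuthProg, h]
  · intro h
    rw [knuthProg_aux a b hb c hc (n + d) (by rw [hd]; linarith)]
    simp [knuthProg, not_lt.mpr h]
end

section
/- Correctness of the program synthesized for the Takeuchi (Tak) function: Define f : ℤ → ℤ → ℤ → ℤ by f(x, y, z) = y if x ≤ y, else z if y ≤ z, else x. Then f satisfies the Takeuchi recursive specification: for all integers x, y, z, if x ≤ y then f(x, y, z) = y, and if x > y then f(x, y, z) = f( f(x−1, y, z), f(y−1, z, x), f(z−1, x, y) ). -/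
/-- The synthesized program for the Takeuchi function. -/
def takProg (x y z : ℤ) : ℤ := if x ≤ y then y else if y ≤ z then z else x

/-- Correctness of the synthesized program for the Takeuchi (Tak) function: it
satisfies the Takeuchi recursive specification. -/
theorem takProg_correct :
    ∀ x y z : ℤ, (x ≤ y → takProg x y z = y) ∧
      (x > y → takProg x y z =
        takProg (takProg (x - 1) y z) (takProg (y - 1) z x) (takProg (z - 1) x y)) := by
  intro x y z
  unfold takProg
  constructor <;> intro h <;> split_ifs <;> omega
end
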